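/- arXiv:1410.6539 — 5 statements merged into one kernel-verified Lean document; each statement's English description precedes it below -/
import Mathlib

section
/- Let r ∈ ℝ and σ ∈ [1, ∞), and define N(v) = 2σ·‖v‖_{r,σ} for v ∈ ℂ². Then N is a submultiplicative norm on ℂ², i.e. N(v * w) ≤ N(v)·N(w) for all v, w ∈ ℂ², and ‖v‖_max ≤ (1/σ)·N(v) for all v ∈ ℂ². -/
/-!
Write `a = x + r y` and `b = y - r x`. Up to the factor `√(1 + r²)` the map `(x, y) ↦ (a, b)` is a
rotation, so `|a|² + |b|² = (1 + r²)(|x|² + |y|²)`. Since `σ ≥ 1`, `‖·‖_{r,σ}²` is therefore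
squeezed between `(1 + r²)(|x|² + |y|²) / 2` and `σ²(1 + r²)(|x|² + |y|²)`, and the Euclidean norm
on `ℂ²` is submultiplicative for coordinatewise multiplication; chaining these estimates gives
`‖v * w‖_{r,σ} ≤ 2σ ‖v‖_{r,σ} ‖w‖_{r,σ}`, while the lower bound alone gives
`‖v‖_max ≤ 2 ‖v‖_{r,σ}`. The remaining norm axioms hold because `‖·‖_{r,σ}` is
the sup norm composed with a linear map.
-/

noncomputable section

/-- The `C*`-norm `‖(x,y)‖_max = max{|x|, |y|}` on `ℂ²`. -/
noncomputable def normMax (v : ℂ × ℂ) : ℝ := max (‖v.1‖) (‖v.2‖)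

/-- The norm `‖(x,y)‖_{r,σ} = max{|x + r·y|, σ·|y − r·x|}` on `ℂ²`. -/
noncomputable def normRS (r σ : ℝ) (v : ℂ × ℂ) : ℝ :=
  max (‖v.1 + (r : ℂ) * v.2‖) (σ * ‖v.2 - (r : ℂ) * v.1‖)

/-- Coordinatewise multiplication on `ℂ²`. -/
def cmul (v w : ℂ × ℂ) : ℂ × ℂ := (v.1 * w.1, v.2 * w.2)

lemma norm_add_mul_sq_add_norm_sub_mul_sq (r : ℝ) (x y : ℂ) :
    ‖x + r * y‖ ^ 2 + ‖y - r * x‖ ^ 2 = (1 + r ^ 2) * (‖x‖ ^ 2 + ‖y‖ ^ 2) := by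
  simp only [Complex.sq_norm, Complex.normSq_apply, Complex.add_re, Complex.add_im,
    Complex.sub_re, Complex.sub_im, Complex.mul_re, Complex.mul_im, Complex.ofReal_re,
    Complex.ofReal_im]
  ring

lemma sum_sq_norm_cmul_le (v w : ℂ × ℂ) :
    ‖(cmul v w).1‖ ^ 2 + ‖(cmul v w).2‖ ^ 2 ≤
      (‖v.1‖ ^ 2 + ‖v.2‖ ^ 2) * (‖w.1‖ ^ 2 + ‖w.2‖ ^ 2) := by
  simp only [cmul, norm_mul, mul_pow]
  nlinarith [mul_nonneg (sq_nonneg ‖v.1‖) (sq_nonneg ‖w.2‖),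
    mul_nonneg (sq_nonneg ‖v.2‖) (sq_nonneg ‖w.1‖)]

namespace normRS

variable {r σ : ℝ}

def coords (r σ : ℝ) : ℂ × ℂ →ₗ[ℂ] ℂ × ℂ :=
  (LinearMap.fst ℂ ℂ ℂ + (r : ℂ) • LinearMap.snd ℂ ℂ ℂ).prod
    ((σ : ℂ) • (LinearMap.snd ℂ ℂ ℂ - (r : ℂ) • LinearMap.fst ℂ ℂ ℂ))

lemma eq_norm_coords (hσ : 0 ≤ σ) (v : ℂ × ℂ) : normRS r σ v = ‖coords r σ v‖ := by
  simp [normRS, coords, Prod.norm_def, Complex.norm_real, abs_of_nonneg hσ]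

lemma add_le (hσ : 0 ≤ σ) (v w : ℂ × ℂ) :
    normRS r σ (v + w) ≤ normRS r σ v + normRS r σ w := by
  simpa only [eq_norm_coords hσ, map_add] using norm_add_le _ _

lemma smul (hσ : 0 ≤ σ) (c : ℂ) (v : ℂ × ℂ) : normRS r σ (c • v) = ‖c‖ * normRS r σ v := by
  simp only [eq_norm_coords hσ, map_smul, norm_smul]

lemma nonneg (v : ℂ × ℂ) : 0 ≤ normRS r σ v :=
  le_max_of_le_left (norm_nonneg _)

lemma sq_le (hσ : 1 ≤ σ) (v : ℂ × ℂ) :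
    normRS r σ v ^ 2 ≤ σ ^ 2 * ((1 + r ^ 2) * (‖v.1‖ ^ 2 + ‖v.2‖ ^ 2)) := by
  have hσ2 : 1 ≤ σ ^ 2 := one_le_pow₀ hσ
  rw [← norm_add_mul_sq_add_norm_sub_mul_sq]
  rcases max_cases ‖v.1 + r * v.2‖ (σ * ‖v.2 - r * v.1‖) with ⟨h, -⟩ | ⟨h, -⟩ <;>
    rw [normRS, h] <;> nlinarith [sq_nonneg ‖v.1 + r * v.2‖, sq_nonneg ‖v.2 - r * v.1‖]

lemma one_add_sq_mul_le (hσ : 1 ≤ σ) (v : ℂ × ℂ) :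
    (1 + r ^ 2) * (‖v.1‖ ^ 2 + ‖v.2‖ ^ 2) ≤ 2 * normRS r σ v ^ 2 := by
  have ha : ‖v.1 + r * v.2‖ ≤ normRS r σ v := le_max_left _ _
  have hb : ‖v.2 - r * v.1‖ ≤ normRS r σ v :=
    (le_mul_of_one_le_left (norm_nonneg _) hσ).trans (le_max_right _ _)
  rw [← norm_add_mul_sq_add_norm_sub_mul_sq, two_mul]
  gcongr

lemma cmul_le (hσ : 1 ≤ σ) (v w : ℂ × ℂ) :
    normRS r σ (cmul v w) ≤ 2 * σ * (normRS r σ v * normRS r σ w) := by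
  have hr : 1 ≤ 1 + r ^ 2 := le_add_of_nonneg_right (sq_nonneg r)
  refine le_of_sq_le_sq ?_ (mul_nonneg (by linarith) (mul_nonneg (nonneg v) (nonneg w)))
  calc normRS r σ (cmul v w) ^ 2
      ≤ σ ^ 2 * ((1 + r ^ 2) * (‖(cmul v w).1‖ ^ 2 + ‖(cmul v w).2‖ ^ 2)) := sq_le hσ _
    _ ≤ σ ^ 2 * ((1 + r ^ 2) * ((‖v.1‖ ^ 2 + ‖v.2‖ ^ 2) * (‖w.1‖ ^ 2 + ‖w.2‖ ^ 2))) := by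
        gcongr; exact sum_sq_norm_cmul_le v w
    _ ≤ σ ^ 2 * (((1 + r ^ 2) * (‖v.1‖ ^ 2 + ‖v.2‖ ^ 2)) *
          ((1 + r ^ 2) * (‖w.1‖ ^ 2 + ‖w.2‖ ^ 2))) := by
        rw [mul_mul_mul_comm]; gcongr; exact le_mul_of_one_le_left (by positivity) hr
    _ ≤ σ ^ 2 * ((2 * normRS r σ v ^ 2) * (2 * normRS r σ w ^ 2)) := by
        gcongr σ ^ 2 * ?_
        exact mul_le_mul (one_add_sq_mul_le hσ v) (one_add_sq_mul_le hσ w) (by positivity)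
          (by positivity)
    _ = (2 * σ * (normRS r σ v * normRS r σ w)) ^ 2 := by ring

lemma normMax_le_two_mul (hσ : 1 ≤ σ) (v : ℂ × ℂ) : normMax v ≤ 2 * normRS r σ v := by
  have hsum := one_add_sq_mul_le (r := r) hσ v
  have hr : 0 ≤ r ^ 2 := sq_nonneg r
  have hM := nonneg (r := r) (σ := σ) v
  apply max_le <;> refine le_of_sq_le_sq ?_ (by positivity) <;>
    nlinarith [sq_nonneg ‖v.1‖, sq_nonneg ‖v.2‖, sq_nonneg (normRS r σ v)]

lemma eq_zero_iff (hσ : 1 ≤ σ) (v : ℂ × ℂ) : normRS r σ v = 0 ↔ v = 0 := by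
  refine ⟨fun h => ?_, fun h => by simp [h, normRS]⟩
  have hv := normMax_le_two_mul (r := r) hσ v
  rw [h, mul_zero, normMax, max_le_iff, norm_le_zero_iff, norm_le_zero_iff] at hv
  exact Prod.ext hv.1 hv.2

end normRS

/-- `N(v) = 2σ·‖v‖_{r,σ}` is a submultiplicative norm on `ℂ²` which dominates
`σ·‖v‖_max`. -/
theorem two_sigma_normRS_submultiplicative_norm (r σ : ℝ) (hσ : 1 ≤ σ) :
    (∀ v : ℂ × ℂ, (2 * σ * normRS r σ v = 0 ↔ v = 0)) ∧
    (∀ v w : ℂ × ℂ, 2 * σ * normRS r σ (v + w) ≤ 2 * σ * normRS r σ v + 2 * σ * normRS r σ w) ∧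
    (∀ (c : ℂ) (v : ℂ × ℂ), 2 * σ * normRS r σ (c • v) = ‖c‖ * (2 * σ * normRS r σ v)) ∧
    (∀ v w : ℂ × ℂ, 2 * σ * normRS r σ (cmul v w) ≤ (2 * σ * normRS r σ v) * (2 * σ * normRS r σ w)) ∧
    (∀ v : ℂ × ℂ, normMax v ≤ 1 / σ * (2 * σ * normRS r σ v)) := by
  have hσ0 : 0 < σ := zero_lt_one.trans_le hσ
  have h2σ : 0 < 2 * σ := by positivity
  refine ⟨fun v => ?_, fun v w => ?_, fun c v => ?_, fun v w => ?_, fun v => ?_⟩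
  · rw [mul_eq_zero, or_iff_right h2σ.ne', normRS.eq_zero_iff hσ]
  · rw [← mul_add]
    exact mul_le_mul_of_nonneg_left (normRS.add_le hσ0.le v w) h2σ.le
  · rw [normRS.smul hσ0.le]
    ring
  · calc 2 * σ * normRS r σ (cmul v w)
        ≤ 2 * σ * (2 * σ * (normRS r σ v * normRS r σ w)) :=
          mul_le_mul_of_nonneg_left (normRS.cmul_le hσ v w) h2σ.le
      _ = (2 * σ * normRS r σ v) * (2 * σ * normRS r σ w) := by ring
  · rw [one_div_mul_eq_div, mul_comm 2 σ, mul_assoc, mul_div_cancel_left₀ _ hσ0.ne']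
    exact normRS.normMax_le_two_mul hσ v
end
end

section
/- For r ∈ ℝ and σ : ℕ → [1, ∞), the algebra A_{r,σ} is spectral invariant in c₀(ℕ): an element f ∈ A_{r,σ} has a quasi-inverse in A_{r,σ} if and only if it has a quasi-inverse in c₀(ℕ). -/
open Filter Topology

noncomputable section

/-- `c₀(ℕ)`: complex sequences vanishing at infinity. -/
def c0 : Set (ℕ → ℂ) := {f | Filter.Tendsto f Filter.atTop (nhds (0 : ℂ))}

/-- The sup norm `‖f‖_∞`. -/
noncomputable def supNorm (f : ℕ → ℂ) : ℝ := ⨆ n, ‖f n‖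

/-- The `n`-th block seminorm `2σ(n)·max{|f(2n)+r·f(2n+1)|, σ(n)·|f(2n+1)−r·f(2n)|}`. -/
noncomputable def blockNorm (r : ℝ) (σ : ℕ → ℝ) (f : ℕ → ℂ) (n : ℕ) : ℝ :=
  2 * σ n * max ‖f (2 * n) + (r : ℂ) * f (2 * n + 1)‖
                (σ n * ‖f (2 * n + 1) - (r : ℂ) * f (2 * n)‖)

/-- The norm `‖f‖_{r,σ} = sup_n blockNorm r σ f n`. -/
noncomputable def Anorm (r : ℝ) (σ : ℕ → ℝ) (f : ℕ → ℂ) : ℝ := ⨆ n, blockNorm r σ f n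

/-- The algebra `A_{r,σ}`: elements of `c₀(ℕ)` whose block norms tend to `0`. -/
def Aset (r : ℝ) (σ : ℕ → ℝ) : Set (ℕ → ℂ) :=
  {f | f ∈ c0 ∧ Filter.Tendsto (blockNorm r σ f) Filter.atTop (nhds (0 : ℝ))}

/-! Pointwise the quasi-inverse is `g = f / (f - 1)`, so where `‖f‖ ≤ 1/2` it is `-f` up to a term
quadratic in `f`. Since `σ ≥ 1`, the `n`-th block seminorm `N` of `f` dominates
`2σ(n)‖f(2n)‖` and `2σ(n)‖f(2n+1)‖` up to the factor `1 + |r|`, hence that quadratic term has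
block seminorm `O(N²)`: eventually the block seminorm of `g` is at most `N + (1 + |r|)³ N²`,
which tends to `0`. -/

section QuasiInverse

variable {𝕜 : Type*} [NormedDivisionRing 𝕜] {x y X Y : 𝕜}

theorem norm_le_two_mul_of_add_sub_mul_eq_zero (hx : ‖x‖ ≤ 1 / 2) (hX : x + X - x * X = 0) :
    ‖X‖ ≤ 2 * ‖x‖ := by
  have hmul : ‖1 - x‖ * ‖X‖ = ‖x‖ := by
    rw [← norm_mul, ← norm_neg x]
    congr 1
    calc (1 - x) * X = (1 - x) * X - (x + X - x * X) := by rw [hX, sub_zero]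
      _ = -x := by noncomm_ring
  have hsub : 1 / 2 ≤ ‖1 - x‖ := by
    linarith [norm_sub_norm_le (1 : 𝕜) x, norm_one (α := 𝕜)]
  nlinarith [norm_nonneg X]

theorem norm_add_mul_le_of_add_sub_mul_eq_zero (c : 𝕜) (hx : ‖x‖ ≤ 1 / 2) (hy : ‖y‖ ≤ 1 / 2)
    (hX : x + X - x * X = 0) (hY : y + Y - y * Y = 0) :
    ‖X + c * Y‖ ≤ ‖x + c * y‖ + 2 * ‖x‖ ^ 2 + 2 * ‖c‖ * ‖y‖ ^ 2 := by
  have hXx := norm_le_two_mul_of_add_sub_mul_eq_zero hx hX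
  have hYy := norm_le_two_mul_of_add_sub_mul_eq_zero hy hY
  have hsplit : X + c * Y = -(x + c * y) + x * X + c * (y * Y)
      + (x + X - x * X) + c * (y + Y - y * Y) := by noncomm_ring
  rw [hX, hY, mul_zero, add_zero, add_zero] at hsplit
  calc ‖X + c * Y‖ = ‖-(x + c * y) + x * X + c * (y * Y)‖ := by rw [hsplit]
    _ ≤ ‖x + c * y‖ + ‖x‖ * ‖X‖ + ‖c‖ * (‖y‖ * ‖Y‖) := by
        refine (norm_add₃_le).trans ?_
        simp only [norm_neg, norm_mul, le_refl]
    _ ≤ ‖x + c * y‖ + ‖x‖ * (2 * ‖x‖) + ‖c‖ * (‖y‖ * (2 * ‖y‖)) := by gcongr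
    _ = ‖x + c * y‖ + 2 * ‖x‖ ^ 2 + 2 * ‖c‖ * ‖y‖ ^ 2 := by ring

end QuasiInverse

theorem Complex.norm_le_norm_add_mul_add_abs_mul_norm_sub_mul (r : ℝ) (a b : ℂ) :
    ‖a‖ ≤ ‖a + r * b‖ + |r| * ‖b - r * a‖ :=
  calc ‖a‖ ≤ (1 + r ^ 2) * ‖a‖ := le_mul_of_one_le_left (norm_nonneg a) (by nlinarith)
    _ = ‖(a + r * b) - r * (b - r * a)‖ := by
      rw [← Real.norm_of_nonneg (by positivity : 0 ≤ 1 + r ^ 2), ← Complex.norm_real, ← norm_mul]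
      congr 1
      push_cast
      ring
    _ ≤ ‖a + r * b‖ + |r| * ‖b - r * a‖ := by
      simpa only [norm_mul, Complex.norm_real, Real.norm_eq_abs]
        using norm_sub_le (a + r * b) (r * (b - r * a))

def pairNorm (r s : ℝ) (a b : ℂ) : ℝ :=
  2 * s * max ‖a + r * b‖ (s * ‖b - r * a‖)

theorem blockNorm_eq_pairNorm (r : ℝ) (σ : ℕ → ℝ) (f : ℕ → ℂ) (n : ℕ) :
    blockNorm r σ f n = pairNorm r (σ n) (f (2 * n)) (f (2 * n + 1)) :=
  rfl

namespace pairNorm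

variable {r s : ℝ} {a b : ℂ}

theorem nonneg (hs : 0 ≤ s) : 0 ≤ pairNorm r s a b := by
  unfold pairNorm
  have : 0 ≤ max ‖a + r * b‖ (s * ‖b - r * a‖) := le_max_of_le_left (norm_nonneg _)
  positivity

theorem two_mul_mul_norm_add_le (hs : 0 ≤ s) : 2 * s * ‖a + r * b‖ ≤ pairNorm r s a b :=
  mul_le_mul_of_nonneg_left (le_max_left _ _) (by positivity)

theorem two_mul_sq_mul_norm_sub_le (hs : 0 ≤ s) :
    2 * s ^ 2 * ‖b - r * a‖ ≤ pairNorm r s a b := by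
  have := mul_le_mul_of_nonneg_left (le_max_right ‖a + r * b‖ (s * ‖b - r * a‖))
    (by positivity : 0 ≤ 2 * s)
  unfold pairNorm
  linarith

theorem two_mul_mul_norm_sub_le (hs : 1 ≤ s) : 2 * s * ‖b - r * a‖ ≤ pairNorm r s a b := by
  refine le_trans ?_ (two_mul_sq_mul_norm_sub_le (by linarith))
  have : s ≤ s ^ 2 := by nlinarith
  gcongr

theorem two_mul_mul_norm_fst_le (hs : 1 ≤ s) : 2 * s * ‖a‖ ≤ (1 + |r|) * pairNorm r s a b := by
  have ha := Complex.norm_le_norm_add_mul_add_abs_mul_norm_sub_mul r a b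
  have hu : 2 * s * ‖a + r * b‖ ≤ pairNorm r s a b := two_mul_mul_norm_add_le (by linarith)
  have hv : 2 * s * ‖b - r * a‖ ≤ pairNorm r s a b := two_mul_mul_norm_sub_le hs
  nlinarith [abs_nonneg r]

theorem two_mul_mul_norm_snd_le (hs : 1 ≤ s) : 2 * s * ‖b‖ ≤ (1 + |r|) * pairNorm r s a b := by
  have hb := Complex.norm_le_norm_add_mul_add_abs_mul_norm_sub_mul (-r) b a
  simp only [Complex.ofReal_neg, neg_mul, ← sub_eq_add_neg, sub_neg_eq_add, abs_neg] at hb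
  have hu : 2 * s * ‖a + r * b‖ ≤ pairNorm r s a b := two_mul_mul_norm_add_le (by linarith)
  have hv : 2 * s * ‖b - r * a‖ ≤ pairNorm r s a b := two_mul_mul_norm_sub_le hs
  nlinarith [abs_nonneg r]

theorem le_of_add_sub_mul_eq_zero {A B : ℂ} (hs : 1 ≤ s) (ha : ‖a‖ ≤ 1 / 2) (hb : ‖b‖ ≤ 1 / 2)
    (hA : a + A - a * A = 0) (hB : b + B - b * B = 0) :
    pairNorm r s A B ≤ pairNorm r s a b + (1 + |r|) ^ 3 * pairNorm r s a b ^ 2 := by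
  set N := pairNorm r s a b
  set P := (1 + |r|) * N
  have hs0 : 0 ≤ s := by linarith
  have hss : s ≤ s ^ 2 := by nlinarith
  have hu : 2 * s * ‖a + r * b‖ ≤ N := two_mul_mul_norm_add_le hs0
  have hv : 2 * s ^ 2 * ‖b - r * a‖ ≤ N := two_mul_sq_mul_norm_sub_le hs0
  have haP : (2 * s * ‖a‖) ^ 2 ≤ P ^ 2 :=
    pow_le_pow_left₀ (by positivity) (two_mul_mul_norm_fst_le hs) 2
  have hbP : (2 * s * ‖b‖) ^ 2 ≤ P ^ 2 :=
    pow_le_pow_left₀ (by positivity) (two_mul_mul_norm_snd_le hs) 2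
  have hAB := norm_add_mul_le_of_add_sub_mul_eq_zero (r : ℂ) ha hb hA hB
  have hBA := norm_add_mul_le_of_add_sub_mul_eq_zero (-(r : ℂ)) hb ha hB hA
  simp only [Complex.norm_real, Real.norm_eq_abs, norm_neg, neg_mul, ← sub_eq_add_neg] at hAB hBA
  have hP : (1 + |r|) ^ 3 * N ^ 2 = P ^ 2 + |r| * P ^ 2 := by ring
  rw [hP, pairNorm, mul_max_of_nonneg _ _ (by positivity)]
  apply max_le
  · calc 2 * s * ‖A + r * B‖ ≤ 2 * s * (‖a + r * b‖ + 2 * ‖a‖ ^ 2 + 2 * |r| * ‖b‖ ^ 2) := by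
          gcongr
      _ = 2 * s * ‖a + r * b‖ + s * (2 * ‖a‖) ^ 2 + |r| * (s * (2 * ‖b‖) ^ 2) := by ring
      _ ≤ N + s ^ 2 * (2 * ‖a‖) ^ 2 + |r| * (s ^ 2 * (2 * ‖b‖) ^ 2) := by gcongr
      _ = N + (2 * s * ‖a‖) ^ 2 + |r| * (2 * s * ‖b‖) ^ 2 := by ring
      _ ≤ N + (P ^ 2 + |r| * P ^ 2) := by linarith [mul_le_mul_of_nonneg_left hbP (abs_nonneg r)]
  · calc 2 * s * (s * ‖B - r * A‖) = 2 * s ^ 2 * ‖B - r * A‖ := by ring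
      _ ≤ 2 * s ^ 2 * (‖b - r * a‖ + 2 * ‖b‖ ^ 2 + 2 * |r| * ‖a‖ ^ 2) := by gcongr
      _ = 2 * s ^ 2 * ‖b - r * a‖ + (2 * s * ‖b‖) ^ 2 + |r| * (2 * s * ‖a‖) ^ 2 := by ring
      _ ≤ N + (P ^ 2 + |r| * P ^ 2) := by linarith [mul_le_mul_of_nonneg_left haP (abs_nonneg r)]

end pairNorm

/-- `A_{r,σ}` is spectral invariant in `c₀(ℕ)`. -/
theorem Aset_spectral_invariant (r : ℝ) (σ : ℕ → ℝ) (hσ : ∀ n, 1 ≤ σ n)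
    (f : ℕ → ℂ) (hf : f ∈ Aset r σ) :
    (∃ g ∈ Aset r σ, f + g - f * g = 0 ∧ g + f - g * f = 0) ↔
    (∃ g ∈ c0, f + g - f * g = 0 ∧ g + f - g * f = 0) := by
  refine ⟨fun ⟨g, hg, hfg⟩ => ⟨g, hg.1, hfg⟩, fun ⟨g, hg, hfg, hgf⟩ => ⟨g, ⟨hg, ?_⟩, hfg, hgf⟩⟩
  have hquasi (m : ℕ) : f m + g m - f m * g m = 0 := by simpa using congrFun hfg m
  obtain ⟨M, hsmall⟩ := eventually_atTop.1 <|
    hf.1.norm.eventually (ge_mem_nhds (by norm_num : ‖(0 : ℂ)‖ < 1 / 2))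
  have hbound : Tendsto (fun n ↦ blockNorm r σ f n + (1 + |r|) ^ 3 * blockNorm r σ f n ^ 2)
      atTop (𝓝 0) := by
    simpa using hf.2.add ((hf.2.pow 2).const_mul ((1 + |r|) ^ 3))
  refine squeeze_zero' (.of_forall fun n ↦ ?_) ?_ hbound
  · rw [blockNorm_eq_pairNorm]
    exact pairNorm.nonneg (by linarith [hσ n])
  filter_upwards [eventually_ge_atTop M] with n hn
  simp only [blockNorm_eq_pairNorm]
  exact pairNorm.le_of_add_sub_mul_eq_zero (hσ n) (hsmall _ (by omega)) (hsmall _ (by omega))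
    (hquasi _) (hquasi _)
end
end

section
/- Let r ∈ ℝ, σ : ℕ → [1, ∞), and suppose K > 0 satisfies ‖fg‖_{r,σ} ≤ K(‖f‖_{r,σ}·‖g‖_∞ + ‖f‖_∞·‖g‖_{r,σ}) for all f, g ∈ A_{r,σ}. Then for every n ∈ ℕ, K ≥ σ(n)·|r² − r| / (2(1 + r²)·max{1, |r|}). -/
open Filter Topology

noncomputable section

theorem mem_Aset_of_eventually_eq_zero (r : ℝ) (σ : ℕ → ℝ) {f : ℕ → ℂ}
    (hf : ∀ᶠ m in atTop, f m = 0) : f ∈ Aset r σ := by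
  obtain ⟨N, hN⟩ := eventually_atTop.1 hf
  have hblock : ∀ᶠ m in atTop, blockNorm r σ f m = 0 :=
    eventually_atTop.2 ⟨N, fun m hm => by
      simp [blockNorm, hN (2 * m) (by omega), hN (2 * m + 1) (by omega)]⟩
  exact ⟨tendsto_const_nhds.congr' (hf.mono fun _ h => h.symm),
    tendsto_const_nhds.congr' (hblock.mono fun _ h => h.symm)⟩

def blockSeq (n : ℕ) (a b : ℂ) : ℕ → ℂ :=
  fun m => if m = 2 * n then a else if m = 2 * n + 1 then b else 0

namespace blockSeq

variable (n : ℕ) (a b : ℂ)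

theorem apply_of_ne {m : ℕ} (h₀ : m ≠ 2 * n) (h₁ : m ≠ 2 * n + 1) : blockSeq n a b m = 0 := by
  simp [blockSeq, h₀, h₁]

theorem mul (c d : ℂ) : blockSeq n a b * blockSeq n c d = blockSeq n (a * c) (b * d) := by
  ext m
  by_cases h₀ : m = 2 * n
  · simp [blockSeq, h₀]
  · by_cases h₁ : m = 2 * n + 1 <;> simp [blockSeq, h₀, h₁]

theorem mem_Aset (r : ℝ) (σ : ℕ → ℝ) : blockSeq n a b ∈ Aset r σ :=
  mem_Aset_of_eventually_eq_zero r σ <|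
    eventually_atTop.2 ⟨2 * n + 2, fun _ hm => apply_of_ne n a b (by omega) (by omega)⟩

theorem blockNorm_self (r : ℝ) (σ : ℕ → ℝ) :
    blockNorm r σ (blockSeq n a b) n =
      2 * σ n * max ‖a + (r : ℂ) * b‖ (σ n * ‖b - (r : ℂ) * a‖) := by
  simp [blockNorm, blockSeq]

theorem blockNorm_of_ne (r : ℝ) (σ : ℕ → ℝ) {m : ℕ} (hm : m ≠ n) :
    blockNorm r σ (blockSeq n a b) m = 0 := by
  simp [blockNorm, apply_of_ne n a b (m := 2 * m) (by omega) (by omega),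
    apply_of_ne n a b (m := 2 * m + 1) (by omega) (by omega)]

theorem Anorm_eq (r : ℝ) {σ : ℕ → ℝ} (hσ : 0 ≤ σ n) :
    Anorm r σ (blockSeq n a b) = blockNorm r σ (blockSeq n a b) n := by
  refine IsGreatest.csSup_eq ⟨⟨n, rfl⟩, ?_⟩
  rintro _ ⟨m, rfl⟩
  rcases eq_or_ne m n with rfl | hm
  · exact le_rfl
  · show blockNorm r σ _ m ≤ _
    rw [blockNorm_of_ne n a b r σ hm, blockNorm_self]
    exact mul_nonneg (by positivity) ((norm_nonneg _).trans (le_max_left _ _))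

theorem supNorm_eq : supNorm (blockSeq n a b) = max ‖a‖ ‖b‖ := by
  have hmem : max ‖a‖ ‖b‖ ∈ Set.range fun m => ‖blockSeq n a b m‖ := by
    rcases max_choice ‖a‖ ‖b‖ with h | h <;> rw [h]
    · exact ⟨2 * n, by simp [blockSeq]⟩
    · exact ⟨2 * n + 1, by simp [blockSeq]⟩
  refine IsGreatest.csSup_eq ⟨hmem, ?_⟩
  rintro _ ⟨m, rfl⟩
  by_cases h₀ : m = 2 * n
  · simp [blockSeq, h₀]
  · by_cases h₁ : m = 2 * n + 1
    · simp [blockSeq, h₁]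
    · simp [apply_of_ne n a b h₀ h₁]

end blockSeq

theorem D1_constant_lower_bound_general (r : ℝ) (σ : ℕ → ℝ) (hσ : ∀ n, 1 ≤ σ n)
    (K : ℝ)
    (hD1 : ∀ f ∈ Aset r σ, ∀ g ∈ Aset r σ,
      Anorm r σ (f * g) ≤ K * (Anorm r σ f * supNorm g + supNorm f * Anorm r σ g)) :
    ∀ n : ℕ, σ n * |r ^ 2 - r| / (2 * (1 + r ^ 2) * max 1 |r|) ≤ K := by
  intro n
  have hσn : 0 < σ n := lt_of_lt_of_le one_pos (hσ n)
  -- For `f = e_{2n} + r e_{2n+1}` the term `f(2n+1) − r f(2n)` vanishes, so `‖f‖_{r,σ}` is linear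
  -- in `σ n`; for `f² = e_{2n} + r² e_{2n+1}` it is `r² − r`, making `‖f²‖_{r,σ}` quadratic in `σ n`.
  set f := blockSeq n 1 r
  have hf : Anorm r σ f = 2 * σ n * (1 + r ^ 2) := by
    have h₁ : (1 : ℂ) + r * r = ((1 + r ^ 2 : ℝ) : ℂ) := by push_cast; ring
    rw [blockSeq.Anorm_eq n _ _ r hσn.le, blockSeq.blockNorm_self, mul_one, sub_self, norm_zero,
      mul_zero, h₁, Complex.norm_real, Real.norm_of_nonneg (by positivity),
      max_eq_left (by positivity)]
  have hf_sup : supNorm f = max 1 |r| := by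
    rw [blockSeq.supNorm_eq, norm_one, Complex.norm_real, Real.norm_eq_abs]
  have hff : 2 * σ n * (σ n * |r ^ 2 - r|) ≤ Anorm r σ (f * f) := by
    have h₁ : (r : ℂ) * r - r * (1 * 1) = ((r ^ 2 - r : ℝ) : ℂ) := by push_cast; ring
    rw [blockSeq.mul, blockSeq.Anorm_eq n _ _ r hσn.le, blockSeq.blockNorm_self, h₁,
      Complex.norm_real, Real.norm_eq_abs]
    exact mul_le_mul_of_nonneg_left (le_max_right _ _) (by positivity)
  have key := hff.trans (hD1 f (blockSeq.mem_Aset ..) f (blockSeq.mem_Aset ..))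
  rw [hf, hf_sup] at key
  have hM : 0 < max 1 |r| := lt_of_lt_of_le one_pos (le_max_left _ _)
  rw [div_le_iff₀ (by positivity)]
  nlinarith

/-- Any `D₁`-constant `K` for `A_{r,σ}` in `c₀(ℕ)` satisfies
`K ≥ σ(n)·|r² − r| / (2(1 + r²)·max{1, |r|})` for every `n`. -/
theorem D1_constant_lower_bound (r : ℝ) (σ : ℕ → ℝ) (hσ : ∀ n, 1 ≤ σ n)
    (K : ℝ) (hK : 0 < K)
    (hD1 : ∀ f ∈ Aset r σ, ∀ g ∈ Aset r σ,
      Anorm r σ (f * g) ≤ K * (Anorm r σ f * supNorm g + supNorm f * Anorm r σ g)) :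
    ∀ n : ℕ, σ n * |r ^ 2 - r| / (2 * (1 + r ^ 2) * max 1 |r|) ≤ K :=
  D1_constant_lower_bound_general r σ hσ K hD1
end
end

section
/- For every σ : ℕ → [1, ∞), the algebra A_{0,σ} (the case r = 0) satisfies the D₁-condition in c₀(ℕ): there exists K > 0 such that ‖fg‖_{0,σ} ≤ K(‖f‖_{0,σ}·‖g‖_∞ + ‖f‖_∞·‖g‖_{0,σ}) for all f, g ∈ A_{0,σ}. -/
open Filter Topology

noncomputable section

/-! For `r = 0` the block seminorm at `n` only involves `|f(2n)|` and `|f(2n+1)|`, so it is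
monotone in `|f|`; multiplying by `g` scales it by at most `‖g‖_∞`. Hence
`‖fg‖_{0,σ} ≤ ‖f‖_{0,σ} ‖g‖_∞`, and the `D₁`-condition holds with `K = 1`. -/

lemma norm_le_supNorm_of_mem_c0 {g : ℕ → ℂ} (hg : g ∈ c0) (m : ℕ) : ‖g m‖ ≤ supNorm g := by
  have hbdd : BddAbove (Set.range fun n => ‖g n‖) := hg.norm.bddAbove_range
  exact le_ciSup hbdd m

lemma supNorm_nonneg (f : ℕ → ℂ) : 0 ≤ supNorm f :=
  Real.iSup_nonneg fun _ => norm_nonneg _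

lemma blockNorm_zero (σ : ℕ → ℝ) (f : ℕ → ℂ) (n : ℕ) :
    blockNorm 0 σ f n = 2 * σ n * max ‖f (2 * n)‖ (σ n * ‖f (2 * n + 1)‖) := by
  simp [blockNorm]

lemma blockNorm_zero_nonneg {σ : ℕ → ℝ} (hσ : ∀ n, 0 ≤ σ n) (f : ℕ → ℂ) (n : ℕ) :
    0 ≤ blockNorm 0 σ f n := by
  rw [blockNorm_zero]
  have := hσ n
  positivity

lemma Anorm_zero_nonneg {σ : ℕ → ℝ} (hσ : ∀ n, 0 ≤ σ n) (f : ℕ → ℂ) : 0 ≤ Anorm 0 σ f :=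
  Real.iSup_nonneg (blockNorm_zero_nonneg hσ f)

lemma blockNorm_zero_mul_le {σ : ℕ → ℝ} {n : ℕ} (hσ : 0 ≤ σ n) (f : ℕ → ℂ) {g : ℕ → ℂ}
    {C : ℝ} (hg : ∀ m, ‖g m‖ ≤ C) :
    blockNorm 0 σ (f * g) n ≤ blockNorm 0 σ f n * C := by
  have hC : 0 ≤ C := (norm_nonneg _).trans (hg 0)
  have hfg : ∀ m, ‖(f * g) m‖ ≤ ‖f m‖ * C := fun m => by
    rw [Pi.mul_apply, norm_mul]
    gcongr
    exact hg m
  rw [blockNorm_zero, blockNorm_zero, mul_assoc (2 * σ n), max_mul_of_nonneg _ _ hC,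
    mul_assoc (σ n)]
  gcongr
  · exact hfg _
  · exact hfg _

lemma Anorm_zero_mul_le {σ : ℕ → ℝ} (hσ : ∀ n, 0 ≤ σ n) {f g : ℕ → ℂ}
    (hf : BddAbove (Set.range (blockNorm 0 σ f))) (hg : g ∈ c0) :
    Anorm 0 σ (f * g) ≤ Anorm 0 σ f * supNorm g :=
  ciSup_le fun n => (blockNorm_zero_mul_le (hσ n) f (norm_le_supNorm_of_mem_c0 hg)).trans <|
    mul_le_mul_of_nonneg_right (le_ciSup hf n) (supNorm_nonneg g)

/-- For `r = 0`, `A_{0,σ}` satisfies the `D₁`-condition in `c₀(ℕ)`. -/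
theorem Aset_zero_D1 (σ : ℕ → ℝ) (hσ : ∀ n, 1 ≤ σ n) :
    ∃ K : ℝ, 0 < K ∧ ∀ f ∈ Aset 0 σ, ∀ g ∈ Aset 0 σ,
      Anorm 0 σ (f * g) ≤ K * (Anorm 0 σ f * supNorm g + supNorm f * Anorm 0 σ g) := by
  have hσ₀ : ∀ n, 0 ≤ σ n := fun n => zero_le_one.trans (hσ n)
  refine ⟨1, one_pos, ?_⟩
  rintro f ⟨-, hf⟩ g ⟨hg, -⟩
  have hmul := Anorm_zero_mul_le hσ₀ hf.bddAbove_range hg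
  have hrest := mul_nonneg (supNorm_nonneg f) (Anorm_zero_nonneg hσ₀ g)
  linarith
end
end

section
/- For every σ : ℕ → [1, ∞), the algebra A_{1,σ} (the case r = 1) satisfies the D₁-condition in c₀(ℕ): there exists K > 0 such that ‖fg‖_{1,σ} ≤ K(‖f‖_{1,σ}·‖g‖_∞ + ‖f‖_∞·‖g‖_{1,σ}) for all f, g ∈ A_{1,σ}. -/
open Filter Topology

noncomputable section

/-!
Write a block of `f` as `(a, b) = (f (2n), f (2n+1))` and of `g` as `(c, d)`. The product block is
controlled by the sums and differences of the factors' blocks,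
`ac + bd = ((a+b)(c+d) + (b-a)(d-c))/2` and `bd - ac = ((a+b)(d-c) + (b-a)(c+d))/2`.
In each product term one factor is weighted by `σ` or `σ²` and bounded by the block norm, the
other is bounded by twice the sup norm; `σ ≥ 1` lets `σ` be traded for `σ²`. This gives the
`D₁`-inequality with `K = 1`.
-/

section Block

variable {σ Mf Mg Nf Ng : ℝ} {a b c d : ℂ}

lemma norm_mul_add_mul_le :
    ‖a * c + b * d‖ ≤ (‖a + b‖ * ‖c + d‖ + ‖b - a‖ * ‖d - c‖) / 2 := by
  have hid : a * c + b * d = ((a + b) * (c + d) + (b - a) * (d - c)) / 2 := by ring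
  rw [hid, norm_div, Complex.norm_two, ← norm_mul, ← norm_mul]
  gcongr
  exact norm_add_le _ _

lemma norm_mul_sub_mul_le :
    ‖b * d - a * c‖ ≤ (‖a + b‖ * ‖d - c‖ + ‖b - a‖ * ‖c + d‖) / 2 := by
  have hid : b * d - a * c = ((a + b) * (d - c) + (b - a) * (c + d)) / 2 := by ring
  rw [hid, norm_div, Complex.norm_two, ← norm_mul, ← norm_mul]
  gcongr
  exact norm_add_le _ _

lemma norm_add_le_two_mul (ha : ‖a‖ ≤ Mf) (hb : ‖b‖ ≤ Mf) : ‖a + b‖ ≤ 2 * Mf := by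
  linarith [norm_add_le a b]

lemma norm_sub_le_two_mul (ha : ‖a‖ ≤ Mf) (hb : ‖b‖ ≤ Mf) : ‖b - a‖ ≤ 2 * Mf := by
  linarith [norm_sub_le b a]

lemma block_mul_estimate (hσ : 1 ≤ σ)
    (ha : ‖a‖ ≤ Mf) (hb : ‖b‖ ≤ Mf) (hc : ‖c‖ ≤ Mg) (hd : ‖d‖ ≤ Mg)
    (hab : 2 * σ * max ‖a + b‖ (σ * ‖b - a‖) ≤ Nf)
    (hcd : 2 * σ * max ‖c + d‖ (σ * ‖d - c‖) ≤ Ng) :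
    2 * σ * max ‖a * c + b * d‖ (σ * ‖b * d - a * c‖) ≤ Nf * Mg + Mf * Ng := by
  have h2σ : 0 ≤ 2 * σ := by linarith
  rw [mul_max_of_nonneg _ _ h2σ, max_le_iff] at hab hcd ⊢
  obtain ⟨hsum_f, hdiff_f⟩ := hab
  obtain ⟨hsum_g, hdiff_g⟩ := hcd
  have hσσ : σ ≤ σ * σ := le_mul_of_one_le_left (by linarith) hσ
  have hNf : 0 ≤ Nf := le_trans (by positivity) hsum_f
  have hNg : 0 ≤ Ng := le_trans (by positivity) hsum_g
  constructor
  · calc 2 * σ * ‖a * c + b * d‖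
        ≤ σ * ‖a + b‖ * ‖c + d‖ + σ * ‖b - a‖ * ‖d - c‖ := by
          nlinarith [norm_mul_add_mul_le (a := a) (b := b) (c := c) (d := d)]
      _ ≤ σ * ‖a + b‖ * ‖c + d‖ + (σ * σ * ‖d - c‖) * ‖b - a‖ := by
          nlinarith [mul_nonneg (norm_nonneg (b - a)) (norm_nonneg (d - c))]
      _ ≤ (Nf / 2) * (2 * Mg) + (Ng / 2) * (2 * Mf) := by
          gcongr
          · linarith
          · exact norm_add_le_two_mul hc hd
          · linarith
          · exact norm_sub_le_two_mul ha hb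
      _ = Nf * Mg + Mf * Ng := by ring
  · calc 2 * σ * (σ * ‖b * d - a * c‖)
        ≤ (σ * σ * ‖d - c‖) * ‖a + b‖ + (σ * σ * ‖b - a‖) * ‖c + d‖ := by
          nlinarith [norm_mul_sub_mul_le (a := a) (b := b) (c := c) (d := d)]
      _ ≤ (Ng / 2) * (2 * Mf) + (Nf / 2) * (2 * Mg) := by
          gcongr
          · linarith
          · exact norm_add_le_two_mul ha hb
          · linarith
          · exact norm_add_le_two_mul hc hd
      _ = Nf * Mg + Mf * Ng := by ring

end Block

lemma blockNorm_one_mul_le {σ : ℕ → ℝ} {f g : ℕ → ℂ} {Mf Mg Nf Ng : ℝ} {n : ℕ} (hσ : 1 ≤ σ n)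
    (hf : ∀ k, ‖f k‖ ≤ Mf) (hg : ∀ k, ‖g k‖ ≤ Mg)
    (hNf : blockNorm 1 σ f n ≤ Nf) (hNg : blockNorm 1 σ g n ≤ Ng) :
    blockNorm 1 σ (f * g) n ≤ Nf * Mg + Mf * Ng := by
  simp only [blockNorm, Complex.ofReal_one, one_mul] at hNf hNg ⊢
  exact block_mul_estimate hσ (hf _) (hf _) (hg _) (hg _) hNf hNg

lemma norm_le_supNorm {f : ℕ → ℂ} (hf : f ∈ c0) (k : ℕ) : ‖f k‖ ≤ supNorm f :=
  le_ciSup (by simpa using hf.norm.bddAbove_range) k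

lemma blockNorm_le_Anorm {r : ℝ} {σ : ℕ → ℝ} {f : ℕ → ℂ}
    (hf : Tendsto (blockNorm r σ f) atTop (𝓝 0)) (n : ℕ) : blockNorm r σ f n ≤ Anorm r σ f :=
  le_ciSup hf.bddAbove_range n

/-- For `r = 1`, `A_{1,σ}` satisfies the `D₁`-condition in `c₀(ℕ)`. -/
theorem Aset_one_D1 (σ : ℕ → ℝ) (hσ : ∀ n, 1 ≤ σ n) :
    ∃ K : ℝ, 0 < K ∧ ∀ f ∈ Aset 1 σ, ∀ g ∈ Aset 1 σ,
      Anorm 1 σ (f * g) ≤ K * (Anorm 1 σ f * supNorm g + supNorm f * Anorm 1 σ g) := by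
  refine ⟨1, one_pos, fun f ⟨hf0, hfb⟩ g ⟨hg0, hgb⟩ => ?_⟩
  rw [one_mul]
  exact ciSup_le fun n => blockNorm_one_mul_le (hσ n) (norm_le_supNorm hf0)
    (norm_le_supNorm hg0) (blockNorm_le_Anorm hfb n) (blockNorm_le_Anorm hgb n)
end
end
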